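/- Let (X, 𝓔) be a coarse space. The following are equivalent: (1) there is a sequence (nᵢ) of positive integers such that for every sequence of entourages K₁, K₂, … in 𝓔 there is a finite sequence of families 𝒱₁, …, 𝒱ᵣ of subsets of X such that 𝒱₁ = {X}, every V ∈ 𝒱ᵢ admits a (Kᵢ, nᵢ)-decomposition over 𝒱ᵢ₊₁ for every 1 ≤ i < r, and 𝒱ᵣ is uniformly bounded; (2) for every sequence of entourages L₁, L₂, … in 𝓔 there is a finite sequence of families 𝒰₁, …, 𝒰ₛ of subsets of X such that 𝒰₁ = {X}, every U ∈ 𝒰ᵢ admits an (Lᵢ, 2)-decomposition over 𝒰ᵢ₊₁ for every 1 ≤ i < s, and 𝒰ₛ is uniformly bounded. -/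

import Mathlib

/-- A coarse structure on a set `X`: a collection of subsets of `X × X` (entourages)
containing the diagonal and closed under subsets, finite unions, inverses and composition. -/
structure CoarseStructure (X : Type*) where
  sets : Set (Set (X × X))
  diagonal_mem : {p : X × X | p.1 = p.2} ∈ sets
  subset_mem : ∀ E ∈ sets, ∀ F : Set (X × X), F ⊆ E → F ∈ sets
  union_mem : ∀ E ∈ sets, ∀ F ∈ sets, E ∪ F ∈ sets
  inv_mem : ∀ E ∈ sets, {p : X × X | (p.2, p.1) ∈ E} ∈ sets
  comp_mem : ∀ E ∈ sets, ∀ F ∈ sets,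
    {p : X × X | ∃ y, (p.1, y) ∈ E ∧ (y, p.2) ∈ F} ∈ sets

/-- A family `𝒰` of subsets of `X` is `E`-disjoint if for all distinct `U, V ∈ 𝒰`,
`(U × V) ∩ E = ∅`. -/
def EDisjoint {X : Type*} (E : Set (X × X)) (𝒰 : Set (Set X)) : Prop :=
  ∀ U ∈ 𝒰, ∀ V ∈ 𝒰, U ≠ V → (U ×ˢ V) ∩ E = ∅

/-- A family `𝒰` is uniformly bounded if `⋃_{U ∈ 𝒰} U × U` is an entourage. -/
def UniformlyBounded {X : Type*} (𝓔 : CoarseStructure X) (𝒰 : Set (Set X)) : Prop :=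
  (⋃ U ∈ 𝒰, U ×ˢ U) ∈ 𝓔.sets

/-- The image of `E ⊆ (X × Y) × (X × Y)` under `p₁ × p₁`. -/
def projFst {X Y : Type*} (E : Set ((X × Y) × (X × Y))) : Set (X × X) :=
  (fun p : (X × Y) × (X × Y) => (p.1.1, p.2.1)) '' E

/-- The image of `E ⊆ (X × Y) × (X × Y)` under `p₂ × p₂`. -/
def projSnd {X Y : Type*} (E : Set ((X × Y) × (X × Y))) : Set (Y × Y) :=
  (fun p : (X × Y) × (X × Y) => (p.1.2, p.2.2)) '' E

/-- The product coarse structure `𝓔 ∗ 𝓕` on `X × Y`. -/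
def prodCoarse {X Y : Type*} (𝓔 : CoarseStructure X) (𝓕 : CoarseStructure Y) :
    CoarseStructure (X × Y) where
  sets := {E | projFst E ∈ 𝓔.sets ∧ projSnd E ∈ 𝓕.sets}
  diagonal_mem := by
    constructor
    · refine 𝓔.subset_mem _ 𝓔.diagonal_mem _ ?_
      rintro ⟨a, b⟩ ⟨⟨p, q⟩, hpq, h⟩
      simp only [Set.mem_setOf_eq] at hpq
      cases h
      simp [hpq]
    · refine 𝓕.subset_mem _ 𝓕.diagonal_mem _ ?_
      rintro ⟨a, b⟩ ⟨⟨p, q⟩, hpq, h⟩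
      simp only [Set.mem_setOf_eq] at hpq
      cases h
      simp [hpq]
  subset_mem := by
    rintro E ⟨hE1, hE2⟩ F hFE
    exact ⟨𝓔.subset_mem _ hE1 _ (Set.image_mono hFE),
      𝓕.subset_mem _ hE2 _ (Set.image_mono hFE)⟩
  union_mem := by
    rintro E ⟨hE1, hE2⟩ F ⟨hF1, hF2⟩
    constructor
    · rw [projFst, Set.image_union]
      exact 𝓔.union_mem _ hE1 _ hF1
    · rw [projSnd, Set.image_union]
      exact 𝓕.union_mem _ hE2 _ hF2
  inv_mem := by
    rintro E ⟨hE1, hE2⟩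
    constructor
    · refine 𝓔.subset_mem _ (𝓔.inv_mem _ hE1) _ ?_
      rintro ⟨a, b⟩ ⟨⟨p, q⟩, hpq, h⟩
      cases h
      exact ⟨(q, p), hpq, rfl⟩
    · refine 𝓕.subset_mem _ (𝓕.inv_mem _ hE2) _ ?_
      rintro ⟨a, b⟩ ⟨⟨p, q⟩, hpq, h⟩
      cases h
      exact ⟨(q, p), hpq, rfl⟩
  comp_mem := by
    rintro E ⟨hE1, hE2⟩ F ⟨hF1, hF2⟩
    constructor
    · refine 𝓔.subset_mem _ (𝓔.comp_mem _ hE1 _ hF1) _ ?_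
      rintro ⟨a, b⟩ ⟨⟨p, q⟩, ⟨y, hy1, hy2⟩, h⟩
      cases h
      exact ⟨y.1, ⟨(p, y), hy1, rfl⟩, ⟨(y, q), hy2, rfl⟩⟩
    · refine 𝓕.subset_mem _ (𝓕.comp_mem _ hE2 _ hF2) _ ?_
      rintro ⟨a, b⟩ ⟨⟨p, q⟩, ⟨y, hy1, hy2⟩, h⟩
      cases h
      exact ⟨y.2, ⟨(p, y), hy1, rfl⟩, ⟨(y, q), hy2, rfl⟩⟩
/-- `Y` admits an `(E, n)`-decomposition over `𝒰` if `Y = Y¹ ∪ ⋯ ∪ Yⁿ` where each `Yⁱ`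
is the union of an `E`-disjoint subfamily of `𝒰`. -/
def AdmitsDecomposition {X : Type*} (E : Set (X × X)) (n : ℕ) (Y : Set X)
    (𝒰 : Set (Set X)) : Prop :=
  ∃ Z : Fin n → Set X, Y = ⋃ i, Z i ∧
    ∀ i, ∃ 𝒟 ⊆ 𝒰, EDisjoint E 𝒟 ∧ Z i = ⋃₀ 𝒟

/-- Coarse property C: for every increasing sequence of entourages `E₁ ⊆ E₂ ⊆ ⋯`
there are finitely many families `𝒰₁, …, 𝒰ₙ` that together cover `X`, with `𝒰ᵢ`
being `Eᵢ`-disjoint and uniformly bounded. -/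
def CoarsePropertyC {X : Type*} (𝓔 : CoarseStructure X) : Prop :=
  ∀ E : ℕ → Set (X × X), (∀ i, E i ∈ 𝓔.sets) → (∀ i, E i ⊆ E (i + 1)) →
    ∃ n : ℕ, ∃ 𝒰 : ℕ → Set (Set X),
      (∀ x : X, ∃ i < n, ∃ U ∈ 𝒰 i, x ∈ U) ∧
      (∀ i < n, EDisjoint (E i) (𝒰 i)) ∧
      (∀ i < n, UniformlyBounded 𝓔 (𝒰 i))

/-- The sequence `n` witnesses coarse countable asymptotic dimension for `(X, 𝓔)`:
for every sequence of entourages `Kᵢ` there is a finite chain of families starting at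
`{X}`, where each member of the `i`-th family admits a `(Kᵢ, nᵢ)`-decomposition over the
next family, ending with a uniformly bounded family. -/
def CAsdimWitness {X : Type*} (𝓔 : CoarseStructure X) (n : ℕ → ℕ) : Prop :=
  ∀ K : ℕ → Set (X × X), (∀ i, K i ∈ 𝓔.sets) →
    ∃ r : ℕ, ∃ 𝒱 : ℕ → Set (Set X),
      𝒱 0 = {Set.univ} ∧
      (∀ i < r, ∀ V ∈ 𝒱 i, AdmitsDecomposition (K i) (n i) V (𝒱 (i + 1))) ∧
      UniformlyBounded 𝓔 (𝒱 r)

/-- Coarse countable asymptotic dimension. -/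
def CoarseCountableAsdim {X : Type*} (𝓔 : CoarseStructure X) : Prop :=
  ∃ n : ℕ → ℕ, (∀ i, 0 < n i) ∧ CAsdimWitness 𝓔 n

/-- Straight finite coarse decomposition complexity (sFCDC). -/
def SFCDC {X : Type*} (𝓔 : CoarseStructure X) : Prop :=
  ∀ L : ℕ → Set (X × X), (∀ i, L i ∈ 𝓔.sets) →
    ∃ m : ℕ, ∃ 𝒱 : ℕ → Set (Set X),
      𝒱 0 = {Set.univ} ∧
      (∀ i < m, ∀ V ∈ 𝒱 i, AdmitsDecomposition (L i) 2 V (𝒱 (i + 1))) ∧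
      UniformlyBounded 𝓔 (𝒱 m)

/-! Given the sizes `nᵢ`, cut the sequence of entourages `L₀, L₁, …` into consecutive blocks of
lengths `n₀, n₁, …` and let `Kᵢ` be the union of the `i`-th block. A `(Kᵢ, nᵢ)`-decomposition
`V = Z₁ ∪ ⋯ ∪ Zₙ` unfolds into `n` binary decompositions
`V = Z₁ ∪ (Z₂ ∪ ⋯ ∪ Zₙ)`, `Z₂ ∪ ⋯ ∪ Zₙ = Z₂ ∪ (Z₃ ∪ ⋯ ∪ Zₙ)`, …, and the `t`-th of them only has
to separate for the `t`-th entourage of the block. Conversely, sFCDC is the case `nᵢ = 2`. -/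

namespace CoarseStructure

variable {X : Type*}

theorem biUnion_mem (𝓔 : CoarseStructure X) {ι : Type*} (s : Finset ι) {E : ι → Set (X × X)}
    (hE : ∀ i ∈ s, E i ∈ 𝓔.sets) : (⋃ i ∈ s, E i) ∈ 𝓔.sets := by
  classical
  induction s using Finset.induction with
  | empty => exact 𝓔.subset_mem _ 𝓔.diagonal_mem _ (by simp)
  | insert a s _ ih =>
    rw [Finset.set_biUnion_insert]
    exact 𝓔.union_mem _ (hE a (by simp)) _ (ih fun i hi => hE i (by simp [hi]))

end CoarseStructure

section Decomposition

variable {X : Type*} {E F : Set (X × X)} {𝒰 𝒰' : Set (Set X)} {V : Set X}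

theorem EDisjoint.mono (hFE : F ⊆ E) {𝒟 : Set (Set X)} (h : EDisjoint E 𝒟) :
    EDisjoint F 𝒟 := fun U hU W hW hUW =>
  Set.subset_eq_empty (Set.inter_subset_inter_right _ hFE) (h U hU W hW hUW)

theorem eDisjoint_empty (E : Set (X × X)) : EDisjoint E (∅ : Set (Set X)) :=
  fun _ hU => absurd hU (Set.notMem_empty _)

theorem eDisjoint_singleton (E : Set (X × X)) (W : Set X) : EDisjoint E {W} :=
  fun _ hU _ hV hUV => absurd (hU.trans hV.symm) hUV

theorem AdmitsDecomposition.mono {n : ℕ} (hFE : F ⊆ E) (h𝒰 : 𝒰 ⊆ 𝒰')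
    (h : AdmitsDecomposition E n V 𝒰) : AdmitsDecomposition F n V 𝒰' := by
  obtain ⟨Z, hV, hZ⟩ := h
  refine ⟨Z, hV, fun i => ?_⟩
  obtain ⟨𝒟, h𝒟, hdisj, hZi⟩ := hZ i
  exact ⟨𝒟, h𝒟.trans h𝒰, hdisj.mono hFE, hZi⟩

theorem AdmitsDecomposition.of_le {n m : ℕ} (hnm : n ≤ m) (h : AdmitsDecomposition E n V 𝒰) :
    AdmitsDecomposition E m V 𝒰 := by
  obtain ⟨Z, hV, hZ⟩ := h
  refine ⟨fun i => if hi : (i : ℕ) < n then Z ⟨i, hi⟩ else ∅, ?_, fun i => ?_⟩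
  · rw [hV]
    ext x
    simp only [Set.mem_iUnion]
    constructor
    · rintro ⟨i, hx⟩
      exact ⟨Fin.castLE hnm i, by simpa using hx⟩
    · rintro ⟨i, hx⟩
      split_ifs at hx with hi
      · exact ⟨_, hx⟩
      · exact absurd hx (Set.notMem_empty x)
  · dsimp only
    split_ifs with hi
    · exact hZ _
    · exact ⟨∅, Set.empty_subset _, eDisjoint_empty E, Set.sUnion_empty.symm⟩

theorem admitsDecomposition_of_mem {n : ℕ} (hn : 0 < n) (hV : V ∈ 𝒰) :
    AdmitsDecomposition E n V 𝒰 :=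
  AdmitsDecomposition.of_le hn ⟨fun _ => V, (Set.iUnion_const V).symm, fun _ =>
    ⟨{V}, Set.singleton_subset_iff.mpr hV, eDisjoint_singleton E V, (Set.sUnion_singleton V).symm⟩⟩

theorem AdmitsDecomposition.two_of_succ {n : ℕ} (hn : 0 < n)
    (h : AdmitsDecomposition E (n + 1) V 𝒰) :
    AdmitsDecomposition E 2 V {W | AdmitsDecomposition E n W 𝒰} := by
  obtain ⟨Z, hV, hZ⟩ := h
  obtain ⟨𝒟, h𝒟, hdisj, hZ0⟩ := hZ 0
  set W := ⋃ i, Z (Fin.succ i)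
  have hW : AdmitsDecomposition E n W 𝒰 := ⟨fun i => Z i.succ, rfl, fun i => hZ i.succ⟩
  refine ⟨![Z 0, W], ?_, Fin.forall_fin_two.mpr ⟨?_, ?_⟩⟩
  · rw [hV, Set.iUnion_fin_add_one_eq_iUnion_succ]
    ext x
    simp [W, Fin.exists_fin_two]
  · exact ⟨𝒟, fun U hU => admitsDecomposition_of_mem hn (h𝒟 hU), hdisj, hZ0⟩
  · exact ⟨{W}, Set.singleton_subset_iff.mpr hW, eDisjoint_singleton E W,
      (Set.sUnion_singleton W).symm⟩

end Decomposition

section Chain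

variable {X : Type*}

def BinaryDecompChain (L : ℕ → Set (X × X)) (m : ℕ) (𝒜 ℬ : Set (Set X)) : Prop :=
  ∃ 𝒲 : ℕ → Set (Set X), 𝒲 0 = 𝒜 ∧ 𝒲 m = ℬ ∧
    ∀ i < m, ∀ W ∈ 𝒲 i, AdmitsDecomposition (L i) 2 W (𝒲 (i + 1))

variable {L : ℕ → Set (X × X)} {𝒜 ℬ 𝒞 : Set (Set X)}

theorem BinaryDecompChain.refl (L : ℕ → Set (X × X)) (𝒜 : Set (Set X)) :
    BinaryDecompChain L 0 𝒜 𝒜 :=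
  ⟨fun _ => 𝒜, rfl, rfl, fun _ hi => absurd hi (Nat.not_lt_zero _)⟩

theorem binaryDecompChain_one (h : ∀ V ∈ 𝒜, AdmitsDecomposition (L 0) 2 V ℬ) :
    BinaryDecompChain L 1 𝒜 ℬ :=
  ⟨fun j => if j = 0 then 𝒜 else ℬ, rfl, rfl, fun i hi => by
    obtain rfl : i = 0 := Nat.lt_one_iff.mp hi
    exact h⟩

theorem BinaryDecompChain.trans {a b : ℕ} (h₁ : BinaryDecompChain L a 𝒜 ℬ)
    (h₂ : BinaryDecompChain (fun t => L (a + t)) b ℬ 𝒞) : BinaryDecompChain L (a + b) 𝒜 𝒞 := by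
  obtain ⟨𝒰, h𝒰0, h𝒰a, h𝒰⟩ := h₁
  obtain ⟨𝒲, h𝒲0, h𝒲b, h𝒲⟩ := h₂
  set 𝒵 : ℕ → Set (Set X) := fun s => if s ≤ a then 𝒰 s else 𝒲 (s - a)
  have h𝒵_le {s : ℕ} (hs : s ≤ a) : 𝒵 s = 𝒰 s := if_pos hs
  have h𝒵_ge {s : ℕ} (hs : a ≤ s) : 𝒵 s = 𝒲 (s - a) := by
    rcases hs.eq_or_lt with rfl | hs
    · rw [h𝒵_le le_rfl, h𝒰a, Nat.sub_self, h𝒲0]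
    · exact if_neg (Nat.not_le.mpr hs)
  refine ⟨𝒵, (h𝒵_le a.zero_le).trans h𝒰0, (h𝒵_ge le_self_add).trans (by simpa using h𝒲b),
    fun i hi => ?_⟩
  rcases Nat.lt_or_ge i a with hia | hai
  · rw [h𝒵_le hia.le, h𝒵_le hia]
    exact h𝒰 i hia
  · obtain ⟨k, rfl⟩ := Nat.exists_eq_add_of_le hai
    rw [h𝒵_ge hai, h𝒵_ge (s := a + k + 1) (by omega), Nat.add_sub_cancel_left,
      Nat.add_assoc, Nat.add_sub_cancel_left]
    exact h𝒲 k (by omega)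

theorem binaryDecompChain_of_admitsDecomposition {K : Set (X × X)} {n : ℕ} (hn : 0 < n)
    (hL : ∀ t < n, L t ⊆ K) (h : ∀ V ∈ 𝒜, AdmitsDecomposition K n V ℬ) :
    BinaryDecompChain L n 𝒜 ℬ := by
  induction n, hn using Nat.le_induction generalizing L 𝒜 with
  | base =>
    exact binaryDecompChain_one fun V hV =>
      (h V hV).of_le one_le_two |>.mono (hL 0 one_pos) subset_rfl
  | succ n hn ih =>
    -- The intermediate family contains `ℬ` as well as the tails `Z₂ ∪ ⋯ ∪ Zₙ₊₁`.
    have hfirst : BinaryDecompChain L 1 𝒜 {W | AdmitsDecomposition K n W ℬ} :=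
      binaryDecompChain_one fun V hV =>
        ((h V hV).two_of_succ hn).mono (hL 0 (Nat.succ_pos n)) subset_rfl
    have hrest : BinaryDecompChain (fun t => L (1 + t)) n {W | AdmitsDecomposition K n W ℬ} ℬ :=
      ih (fun t ht => hL (1 + t) (by omega)) fun _ hW => hW
    rw [Nat.add_comm]
    exact hfirst.trans hrest

theorem binaryDecompChain_of_decompChain {K : ℕ → Set (X × X)} {n : ℕ → ℕ} (hn : ∀ i, 0 < n i)
    (hLK : ∀ i, ∀ t < n i, L (∑ j ∈ Finset.range i, n j + t) ⊆ K i) {𝒱 : ℕ → Set (Set X)} :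
    ∀ r, (∀ i < r, ∀ V ∈ 𝒱 i, AdmitsDecomposition (K i) (n i) V (𝒱 (i + 1))) →
      BinaryDecompChain L (∑ j ∈ Finset.range r, n j) (𝒱 0) (𝒱 r)
  | 0, _ => BinaryDecompChain.refl L (𝒱 0)
  | r + 1, h => by
    rw [Finset.sum_range_succ]
    exact (binaryDecompChain_of_decompChain hn hLK r fun i hi => h i (by omega)).trans
      (binaryDecompChain_of_admitsDecomposition (hn r) (hLK r) (h r (by omega)))

end Chain

theorem sfcdc_of_cAsdimWitness {X : Type*} {𝓔 : CoarseStructure X} {n : ℕ → ℕ}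
    (hn : ∀ i, 0 < n i) (h : CAsdimWitness 𝓔 n) : SFCDC 𝓔 := by
  intro L hL
  set S : ℕ → ℕ := fun i => ∑ j ∈ Finset.range i, n j
  set K : ℕ → Set (X × X) := fun i => ⋃ t ∈ Finset.range (n i), L (S i + t)
  have hK (i : ℕ) : K i ∈ 𝓔.sets := 𝓔.biUnion_mem _ fun t _ => hL (S i + t)
  have hLK (i : ℕ) (t : ℕ) (ht : t < n i) : L (S i + t) ⊆ K i :=
    Set.subset_biUnion_of_mem (u := fun t => L (S i + t))
      (Finset.mem_coe.mpr (Finset.mem_range.mpr ht))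
  obtain ⟨r, 𝒱, h𝒱0, hdec, hbdd⟩ := h K hK
  obtain ⟨𝒲, h𝒲0, h𝒲r, hsteps⟩ := binaryDecompChain_of_decompChain hn hLK r hdec
  exact ⟨S r, 𝒲, h𝒲0.trans h𝒱0, hsteps, h𝒲r ▸ hbdd⟩

/-- The coarse analog of Dydak's countable asymptotic dimension is equivalent to
straight finite coarse decomposition complexity. -/
theorem countableAsdim_iff_sFCDC {X : Type*} (𝓔 : CoarseStructure X) :
    (∃ n : ℕ → ℕ, (∀ i, 0 < n i) ∧ CAsdimWitness 𝓔 n) ↔ SFCDC 𝓔 :=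
  ⟨fun ⟨_, hn, h⟩ => sfcdc_of_cAsdimWitness hn h, fun h => ⟨fun _ => 2, fun _ => two_pos, h⟩⟩
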